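/- For Hermitian X on a finite-dimensional space and any matrix B, ‖[X, B]‖ ≤ 2 ‖X‖' ‖B‖, where ‖X‖' = min_{c∈ℝ} ‖X − cI‖. -/

import Mathlib

open Matrix MeasureTheory Filter Kronecker
open scoped ComplexOrder

noncomputable def traceNorm {n : Type*} [Fintype n] [DecidableEq n] (X : Matrix n n ℂ) : ℝ :=
  (((Matrix.posSemidef_conjTranspose_mul_self X).1.eigenvectorUnitary : Matrix n n ℂ) *
    diagonal (((↑) : ℝ → ℂ) ∘ (Real.sqrt ·) ∘ (Matrix.posSemidef_conjTranspose_mul_self X).1.eigenvalues) *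
    (star ((Matrix.posSemidef_conjTranspose_mul_self X).1.eigenvectorUnitary : Matrix n n ℂ))).trace.re

noncomputable def frobNorm {n : Type*} [Fintype n] (X : Matrix n n ℂ) : ℝ :=
  Real.sqrt ((Xᴴ * X)).trace.re

noncomputable def opNorm {n : Type*} [Fintype n] [DecidableEq n] (X : Matrix n n ℂ) : ℝ :=
  ‖LinearMap.toContinuousLinearMap (Matrix.toEuclideanLin X)‖

/-! Scalars are central, so `[X - c, B] = [X, B]` for every `c`; and `‖[A, B]‖ ≤ 2 ‖A‖ ‖B‖` in
any normed ring by the triangle inequality and submultiplicativity. Apply the second bound with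
`A = X - c` and take the infimum over `c`. -/

lemma commutator_sub_smul_one {R A : Type*} [CommSemiring R] [Ring A] [Algebra R A]
    (a b : A) (c : R) : (a - c • 1) * b - b * (a - c • 1) = a * b - b * a := by
  rw [sub_mul, mul_sub, smul_one_mul, mul_smul_one]
  abel

lemma norm_commutator_le {A : Type*} [NormedRing A] (a b : A) :
    ‖a * b - b * a‖ ≤ 2 * ‖a‖ * ‖b‖ :=
  calc ‖a * b - b * a‖ ≤ ‖a * b‖ + ‖b * a‖ := norm_sub_le _ _
    _ ≤ ‖a‖ * ‖b‖ + ‖b‖ * ‖a‖ := add_le_add (norm_mul_le _ _) (norm_mul_le _ _)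
    _ = 2 * ‖a‖ * ‖b‖ := by ring

lemma norm_commutator_le_two_mul_iInf_norm_sub_smul_one {ι R A : Type*} [Nonempty ι]
    [CommSemiring R] [NormedRing A] [Algebra R A] (f : ι → R) (a b : A) :
    ‖a * b - b * a‖ ≤ 2 * (⨅ i, ‖a - f i • 1‖) * ‖b‖ := by
  rw [Real.mul_iInf_of_nonneg zero_le_two, Real.iInf_mul_of_nonneg (norm_nonneg b)]
  refine le_ciInf fun i => ?_
  rw [← commutator_sub_smul_one a b (f i)]
  exact norm_commutator_le _ _

theorem opNorm_commutator_le_two_centered_norm_general {n : Type*} [Fintype n] [DecidableEq n]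
    (X B : Matrix n n ℂ) :
    opNorm (X * B - B * X) ≤ 2 * (⨅ c : ℝ, opNorm (X - (c : ℂ) • 1)) * opNorm B :=
  -- `opNorm` is definitionally the norm of the scoped L2-operator normed ring on matrices.
  open scoped Matrix.Norms.L2Operator in
  norm_commutator_le_two_mul_iInf_norm_sub_smul_one Complex.ofReal X B

/-- For Hermitian `X` and any `B`: `‖[X,B]‖ ≤ 2 ‖X‖' ‖B‖`,
where `‖X‖' = inf_{c ∈ ℝ} ‖X − cI‖`. -/
theorem opNorm_commutator_le_two_centered_norm {n : Type*} [Fintype n] [DecidableEq n]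
    (X B : Matrix n n ℂ) (hX : X.IsHermitian) :
    opNorm (X * B - B * X) ≤ 2 * (⨅ c : ℝ, opNorm (X - (c : ℂ) • 1)) * opNorm B :=
  opNorm_commutator_le_two_centered_norm_general X B
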